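/- arXiv:2207.08985 — 2 statements merged into one kernel-verified Lean document; each statement's English description precedes it below -/
import Mathlib

section
/- Let β = (βₙ) with inf βₙ = δ > 0 and satisfying the weighted Hardy space conditions. Then H_β possesses no frame of normalized reproducing kernels: there is no sequence {zₙ} ⊂ 𝔻 and constants A, B > 0 such that A‖f‖² ≤ Σₙ |⟨f, K_{zₙ}⟩|²/‖K_{zₙ}‖² ≤ B‖f‖² for all f ∈ H_β. -/
open Complex Filter Topology

/-!
Test the lower frame bound on the monomials `zᴹ`. Their norms satisfy `‖zᴹ‖²_β = β_M ≥ δ`, while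
their frame sums `Σₙ |zₙ|^{2M} / ‖K_{zₙ}‖²` tend to `0` as `M → ∞` by dominated convergence,
the case `M = 0` showing that `Σₙ ‖K_{zₙ}‖⁻²` converges.
-/

theorem tendsto_tsum_pow_mul_zero {x c : ℕ → ℝ} (hc : Summable c) (hx : ∀ n, |x n| < 1) :
    Tendsto (fun M : ℕ => ∑' n, x n ^ M * c n) atTop (𝓝 0) := by
  have hlim (n : ℕ) : Tendsto (fun M : ℕ => x n ^ M * c n) atTop (𝓝 (0 * c n)) :=
    (tendsto_pow_atTop_nhds_zero_of_abs_lt_one (hx n)).mul_const (c n)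
  have hbound (M n : ℕ) : ‖x n ^ M * c n‖ ≤ |c n| := by
    rw [Real.norm_eq_abs, abs_mul, abs_pow]
    exact mul_le_of_le_one_left (abs_nonneg _) (pow_le_one₀ (abs_nonneg _) (hx n).le)
  simpa using tendsto_tsum_of_dominated_convergence hc.abs hlim (.of_forall hbound)

theorem summable_norm_sq_single_mul (β : ℕ → ℝ) (M : ℕ) :
    Summable fun m => ‖(Pi.single M 1 : ℕ → ℂ) m‖ ^ 2 * β m := by
  refine summable_of_ne_finset_zero (s := {M}) fun m hm => ?_
  simp_all

theorem tsum_norm_sq_single_mul (β : ℕ → ℝ) (M : ℕ) :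
    ∑' m, ‖(Pi.single M 1 : ℕ → ℂ) m‖ ^ 2 * β m = β M := by
  rw [tsum_eq_single M fun m hm => by simp [hm]]
  simp

theorem tsum_single_mul_pow {R : Type*} [Semiring R] [TopologicalSpace R] (w : R) (M : ℕ) :
    ∑' m, (Pi.single M 1 : ℕ → R) m * w ^ m = w ^ M := by
  rw [tsum_eq_single M fun m hm => by simp [hm]]
  simp

theorem no_frame_of_normalized_kernels_general
    (β : ℕ → ℝ)
    (δ : ℝ) (hδ : 0 < δ) (hδβ : ∀ n, δ ≤ β n) :
    ¬ ∃ (z : ℕ → ℂ) (A B : ℝ), (∀ n, ‖z n‖ < 1) ∧ 0 < A ∧ 0 < B ∧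
      ∀ a : ℕ → ℂ, Summable (fun m => ‖a m‖ ^ 2 * β m) →
        A * (∑' m : ℕ, ‖a m‖ ^ 2 * β m) ≤
            (∑' n : ℕ, ‖∑' m : ℕ, a m * (z n) ^ m‖ ^ 2 /
              (∑' m : ℕ, ‖z n‖ ^ (2 * m) / β m)) ∧
          (∑' n : ℕ, ‖∑' m : ℕ, a m * (z n) ^ m‖ ^ 2 /
              (∑' m : ℕ, ‖z n‖ ^ (2 * m) / β m)) ≤
            B * (∑' m : ℕ, ‖a m‖ ^ 2 * β m) := by
  rintro ⟨z, A, B, hz, hA, -, hframe⟩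
  set K : ℕ → ℝ := fun n => ∑' m : ℕ, ‖z n‖ ^ (2 * m) / β m
  have hmonomial (M : ℕ) : A * β M ≤ ∑' n, (‖z n‖ ^ 2) ^ M * (K n)⁻¹ := by
    have hlower := (hframe _ (summable_norm_sq_single_mul β M)).1
    rw [tsum_norm_sq_single_mul] at hlower
    convert hlower using 3 with n
    rw [tsum_single_mul_pow, norm_pow, ← pow_mul, ← pow_mul, mul_comm 2 M, div_eq_mul_inv]
  -- A divergent series has sum `0`, which the lower bound at `M = 0` rules out.
  have hK : Summable fun n => (K n)⁻¹ := by
    by_contra hdiv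
    have h0 := hmonomial 0
    simp only [pow_zero, one_mul, tsum_eq_zero_of_not_summable hdiv] at h0
    nlinarith [hδβ 0]
  have hlim := tendsto_tsum_pow_mul_zero (x := fun n => ‖z n‖ ^ 2) hK fun n => by
    simpa [abs_of_nonneg] using pow_lt_one₀ (norm_nonneg _) (hz n) two_ne_zero
  have hAδ : A * δ ≤ 0 := ge_of_tendsto' hlim fun M =>
    (mul_le_mul_of_nonneg_left (hδβ M) hA.le).trans (hmonomial M)
  nlinarith

/-- If `inf βₙ = δ > 0`, the weighted Hardy space `H_β` has no frame of normalized
reproducing kernels. Here `H_β` is modeled by Taylor coefficients: for `f = Σ aₘ zᵐ`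
one has `‖f‖²_β = Σ |aₘ|² βₘ`, `⟨f, K_λ⟩ = f(λ) = Σ aₘ λᵐ` and
`‖K_λ‖²_β = Σ |λ|^{2m}/βₘ`, so the frame condition reads
`A‖f‖²_β ≤ Σₙ |f(zₙ)|²/‖K_{zₙ}‖²_β ≤ B‖f‖²_β`. -/
theorem no_frame_of_normalized_kernels
    (β : ℕ → ℝ) (hβ : ∀ n, 0 < β n)
    (hls1 : Filter.limsup (fun n : ℕ => (1 / β n) ^ ((n:ℝ)⁻¹)) Filter.atTop ≤ 1)
    (hls2 : Filter.limsup (fun n : ℕ => (β n) ^ ((n:ℝ)⁻¹)) Filter.atTop ≤ 1)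
    (δ : ℝ) (hδ : 0 < δ) (hδβ : ∀ n, δ ≤ β n) :
    ¬ ∃ (z : ℕ → ℂ) (A B : ℝ), (∀ n, ‖z n‖ < 1) ∧ 0 < A ∧ 0 < B ∧
      ∀ a : ℕ → ℂ, Summable (fun m => ‖a m‖ ^ 2 * β m) →
        A * (∑' m : ℕ, ‖a m‖ ^ 2 * β m) ≤
            (∑' n : ℕ, ‖∑' m : ℕ, a m * (z n) ^ m‖ ^ 2 /
              (∑' m : ℕ, ‖z n‖ ^ (2 * m) / β m)) ∧
          (∑' n : ℕ, ‖∑' m : ℕ, a m * (z n) ^ m‖ ^ 2 /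
              (∑' m : ℕ, ‖z n‖ ^ (2 * m) / β m)) ≤
            B * (∑' m : ℕ, ‖a m‖ ^ 2 * β m) :=
  no_frame_of_normalized_kernels_general β δ hδ hδβ
end

section
/- Let X be a Banach space, f ∈ X, and suppose there exist γ ∈ (0,1), B > 0, and for every g ∈ X an approximation operator producing a finite linear combination S(g) of vectors from a fixed countable family {xₙ} with ‖g - S(g)‖ ≤ γ‖g‖, and such that all partial sums of S(g) (in a fixed order) have norm at most B‖g‖. Then f admits a series representation f = Σ cₙ xₙ converging in norm (with the fixed ordering), i.e., iterating the approximation scheme yields a representing series. -/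
/-!
Subtracting the approximation `S(f_k)` of the current residual `f_k`, placed on the block of
indices right after the previous one, gives residuals with `‖f_k‖ ≤ γ^k ‖f‖`, so the partial sums
at block boundaries, which equal `f - f_k`, converge to `f`. A partial sum stopping inside the
`k`-th block differs from `f` by a partial sum of `S(f_k)` minus `f_k`, hence by at most
`(B + 1) ‖f_k‖`, which tends to `0` as well.
-/

open Filter Topology Finset

/-- The index `k` of the block `[N k, N (k + 1))` containing `n`, when `N` is strictly increasing
with `N 0 = 0`. -/
def blockIndex (N : ℕ → ℕ) (n : ℕ) : ℕ :=
  Nat.findGreatest (fun k => N k ≤ n) n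

section BlockIndex

variable {N : ℕ → ℕ}

lemma le_blockIndex (hN : StrictMono N) {k n : ℕ} (h : N k ≤ n) : k ≤ blockIndex N n :=
  Nat.le_findGreatest (hN.le_apply.trans h) h

lemma apply_blockIndex_le (h0 : N 0 = 0) (n : ℕ) : N (blockIndex N n) ≤ n :=
  Nat.findGreatest_spec (P := fun k => N k ≤ n) (Nat.zero_le n) (by simp [h0])

lemma lt_apply_blockIndex_succ (hN : StrictMono N) (n : ℕ) : n < N (blockIndex N n + 1) := by
  by_contra! h
  exact (le_blockIndex hN h).not_gt (Nat.lt_succ_self _)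

lemma blockIndex_eq (hN : StrictMono N) (h0 : N 0 = 0) {k n : ℕ} (hk : N k ≤ n)
    (hn : n < N (k + 1)) : blockIndex N n = k := by
  refine le_antisymm ?_ (le_blockIndex hN hk)
  by_contra! h
  exact (hN.monotone h |>.trans (apply_blockIndex_le h0 n)).not_gt hn

lemma tendsto_blockIndex (hN : StrictMono N) : Tendsto (blockIndex N) atTop atTop :=
  tendsto_atTop_atTop.2 fun k => ⟨N k, fun _ hn => le_blockIndex hN hn⟩

variable {M : Type*} [AddCommMonoid M]

lemma sum_Ico_blockIndex (hN : StrictMono N) (h0 : N 0 = 0) (v : ℕ → ℕ → M) {k a b : ℕ}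
    (ha : N k ≤ a) (hb : b ≤ N (k + 1)) :
    ∑ i ∈ Ico a b, v (blockIndex N i) i = ∑ i ∈ Ico a b, v k i :=
  sum_congr rfl fun i hi => by
    rw [blockIndex_eq hN h0 (ha.trans (mem_Ico.1 hi).1) ((mem_Ico.1 hi).2.trans_le hb)]

lemma sum_range_blockIndex (hN : StrictMono N) (h0 : N 0 = 0) (v : ℕ → ℕ → M) (k : ℕ) :
    ∑ i ∈ range (N k), v (blockIndex N i) i = ∑ j ∈ range k, ∑ i ∈ Ico (N j) (N (j + 1)), v j i := by
  induction k with
  | zero => simp [h0]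
  | succ k ih =>
    rw [← sum_range_add_sum_Ico _ (hN.monotone k.le_succ), ih, sum_range_succ,
      sum_Ico_blockIndex hN h0 v le_rfl le_rfl]

end BlockIndex

section Concatenation

variable {X : Type*} [SeminormedAddCommGroup X]

lemma tendsto_zero_of_norm_succ_le_mul {g : ℕ → X} {γ : ℝ} (hγ0 : 0 ≤ γ) (hγ1 : γ < 1)
    (hg : ∀ k, ‖g (k + 1)‖ ≤ γ * ‖g k‖) : Tendsto g atTop (𝓝 0) := by
  refine squeeze_zero_norm (fun k => le_geom (u := fun k => ‖g k‖) hγ0 k fun j _ => hg j) ?_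
  simpa using (tendsto_pow_atTop_nhds_zero_of_lt_one hγ0 hγ1).mul_const ‖g 0‖

variable {N : ℕ → ℕ} {v : ℕ → ℕ → X} {g : ℕ → X}

lemma sum_range_blockIndex_sub (hN : StrictMono N) (h0 : N 0 = 0)
    (hblock : ∀ k, ∑ i ∈ Ico (N k) (N (k + 1)), v k i = g k - g (k + 1)) (n : ℕ) :
    ∑ i ∈ range n, v (blockIndex N i) i - g 0 =
      ∑ i ∈ Ico (N (blockIndex N n)) n, v (blockIndex N n) i - g (blockIndex N n) := by
  rw [← sum_range_add_sum_Ico _ (apply_blockIndex_le h0 n), sum_range_blockIndex hN h0,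
    sum_Ico_blockIndex hN h0 v le_rfl (lt_apply_blockIndex_succ hN n).le]
  simp only [hblock, sum_range_sub']
  abel

theorem tendsto_sum_range_blockIndex (hN : StrictMono N) (h0 : N 0 = 0) {B : ℝ}
    (hblock : ∀ k, ∑ i ∈ Ico (N k) (N (k + 1)), v k i = g k - g (k + 1))
    (hpart : ∀ k n, N k ≤ n → n ≤ N (k + 1) → ‖∑ i ∈ Ico (N k) n, v k i‖ ≤ B * ‖g k‖)
    (hg : Tendsto g atTop (𝓝 0)) :
    Tendsto (fun n => ∑ i ∈ range n, v (blockIndex N i) i) atTop (𝓝 (g 0)) := by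
  have hbound : ∀ n, ‖∑ i ∈ range n, v (blockIndex N i) i - g 0‖
      ≤ (B + 1) * ‖g (blockIndex N n)‖ := fun n => by
    rw [sum_range_blockIndex_sub hN h0 hblock, add_one_mul]
    exact (norm_sub_le _ _).trans <| add_le_add_left (hpart _ n (apply_blockIndex_le h0 n)
      (lt_apply_blockIndex_succ hN n).le) _
  rw [tendsto_iff_norm_sub_tendsto_zero]
  refine squeeze_zero (fun _ => norm_nonneg _) hbound ?_
  simpa using ((hg.norm.comp (tendsto_blockIndex hN)).const_mul (B + 1))

end Concatenation

lemma sum_Ico_ite_lt_smul {R M : Type*} [Semiring R] [AddCommMonoid M] [Module R M]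
    (c : ℕ → R) (x : ℕ → M) (a b m : ℕ) :
    ∑ i ∈ Ico a b, (if i < m then c i else 0) • x i = ∑ i ∈ Ico a (min b m), c i • x i := by
  simp only [ite_smul, zero_smul]
  rw [← sum_filter, Ico_filter_lt]

section BlockApprox

variable {R M : Type*} [Semiring R] [SeminormedAddCommGroup M] [Module R M]

def IsBlockApprox (x : ℕ → M) (γ B : ℝ) (g : M) (N m : ℕ) (c : ℕ → R) : Prop :=
  ‖g - ∑ i ∈ Ico N m, c i • x i‖ ≤ γ * ‖g‖ ∧
    ∀ j, N ≤ j → j ≤ m → ‖∑ i ∈ Ico N j, c i • x i‖ ≤ B * ‖g‖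

lemma IsBlockApprox.extend_zero {x : ℕ → M} {γ B : ℝ} {g : M} {N m : ℕ} {c : ℕ → R}
    (h : IsBlockApprox x γ B g N m c) (hNm : N ≤ m) :
    IsBlockApprox x γ B g N (m + 1) fun i => if i < m then c i else 0 := by
  refine ⟨?_, fun j hNj _ => ?_⟩ <;> rw [sum_Ico_ite_lt_smul]
  · simpa using h.1
  · exact h.2 _ (le_min hNj hNm) (min_le_right _ _)

end BlockApprox

theorem abstract_iteration_representing_general
    (X : Type*) [NormedAddCommGroup X] [NormedSpace ℂ X]
    (x : ℕ → X) (γ B : ℝ) (hγ0 : 0 < γ) (hγ1 : γ < 1)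
    (hS : ∀ (g : X) (N : ℕ), ∃ (m : ℕ) (c : ℕ → ℂ), N ≤ m ∧
      ‖g - ∑ i ∈ Finset.Ico N m, c i • x i‖ ≤ γ * ‖g‖ ∧
      ∀ j, N ≤ j → j ≤ m → ‖∑ i ∈ Finset.Ico N j, c i • x i‖ ≤ B * ‖g‖)
    (f : X) :
    ∃ c : ℕ → ℂ,
      Filter.Tendsto (fun N => ∑ i ∈ Finset.range N, c i • x i) Filter.atTop (nhds f) := by
  -- A trailing zero coefficient makes every block nonempty, so the breakpoints strictly increase.
  have hS' : ∀ g n, ∃ (m : ℕ) (c : ℕ → ℂ), n < m ∧ IsBlockApprox x γ B g n m c := fun g n => by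
    obtain ⟨m, c, hnm, h⟩ := hS g n
    exact ⟨m + 1, _, Nat.lt_succ_of_le hnm, IsBlockApprox.extend_zero h hnm⟩
  choose m c hlt happ using hS'
  let step : X × ℕ → X × ℕ := fun p =>
    (p.1 - ∑ i ∈ Ico p.2 (m p.1 p.2), c p.1 p.2 i • x i, m p.1 p.2)
  let r : ℕ → X := fun k => (step^[k] (f, 0)).1
  let N : ℕ → ℕ := fun k => (step^[k] (f, 0)).2
  have hN : ∀ k, N (k + 1) = m (r k) (N k) := fun k =>
    congrArg Prod.snd (Function.iterate_succ_apply' step k (f, 0))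
  have hr : ∀ k, r (k + 1) = r k - ∑ i ∈ Ico (N k) (N (k + 1)), c (r k) (N k) i • x i :=
    fun k => hN k ▸ congrArg Prod.fst (Function.iterate_succ_apply' step k (f, 0))
  have hNmono : StrictMono N := strictMono_nat_of_lt_succ fun k => hN k ▸ hlt _ _
  refine ⟨fun i => c (r (blockIndex N i)) (N (blockIndex N i)) i, ?_⟩
  refine tendsto_sum_range_blockIndex (v := fun k i => c (r k) (N k) i • x i) hNmono rfl
    (fun k => by rw [hr, sub_sub_cancel]) (fun k n h1 h2 => (happ _ _).2 n h1 (hN k ▸ h2)) ?_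
  exact tendsto_zero_of_norm_succ_le_mul hγ0.le hγ1 fun k => hr k ▸ hN k ▸ (happ _ _).1

/-- Abstract iteration scheme: if every `g` in a Banach space can be approximated, within any
block of indices starting at any prescribed position, by a finite linear combination
`S(g) = Σ_{i∈[N,m)} cᵢ xᵢ` of the fixed family `{xₙ}` with `‖g - S(g)‖ ≤ γ‖g‖` (`γ < 1`),
all of whose intermediate partial sums are bounded by `B‖g‖`, then every `f` is the sum of a
norm-convergent series `Σ cₙ xₙ` (in the fixed order of the indices). -/
theorem abstract_iteration_representing
    (X : Type*) [NormedAddCommGroup X] [NormedSpace ℂ X]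
    (x : ℕ → X) (γ B : ℝ) (hγ0 : 0 < γ) (hγ1 : γ < 1) (hB : 0 < B)
    (hS : ∀ (g : X) (N : ℕ), ∃ (m : ℕ) (c : ℕ → ℂ), N ≤ m ∧
      ‖g - ∑ i ∈ Finset.Ico N m, c i • x i‖ ≤ γ * ‖g‖ ∧
      ∀ j, N ≤ j → j ≤ m → ‖∑ i ∈ Finset.Ico N j, c i • x i‖ ≤ B * ‖g‖)
    (f : X) :
    ∃ c : ℕ → ℂ,
      Filter.Tendsto (fun N => ∑ i ∈ Finset.range N, c i • x i) Filter.atTop (nhds f) :=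
  abstract_iteration_representing_general X x γ B hγ0 hγ1 hS f
end
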